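/- arXiv:1812.01964 — 2 statements merged into one kernel-verified Lean document; each statement's English description precedes it below -/
import Mathlib

section
/- For negative reals 0 > λ_{j-1} > λ_j (with the convention λ₀ possibly equal to 0 excluded), define T_{k,j} for distinct indices as in the paper: T_{j,j} = 4|λ_j|(√|λ_j| - √|λ_{j-1}|)/(√|λ_j| + √|λ_{j-1}|) and for k ∉ {j-1, j}, T_{k,j} = (√|λ_j| - √|λ_{k-1}|)(√|λ_j| + √|λ_k|) / ((√|λ_j| - √|λ_k|)(√|λ_j| + √|λ_{k-1}|)). Then for parameters s₂,...,s_m > 0 and β_j defined by e^{-2πiβ_j} = s_j/s_{j+1} (with s_{m+1} = 1), the identity ∏_{k=2}^m T_{k,j}^{(log s_k)/(2πi)} = (4|λ_j|)^{-β_j} ∏_{k≠j} T̃_{k,j}^{-β_k} holds, where T̃_{k,j} = (√|λ_j| + √|λ_k|)²/|λ_j - λ_k|. -/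
open scoped Real

/-- The constants `T_{k,j}` arising in the expansion of the Szegő-type function `D` at the
singularity `λ_j` (paper conventions): `T_{j,j}` and `T_{j+1,j}` are the special cases at
the endpoints of the intervals `(λ_j, λ_{j-1})` and `(λ_{j+1}, λ_j)`, and for all other `k`
the general cross-ratio formula applies. -/
noncomputable def Tconst (lam : ℕ → ℝ) (k j : ℕ) : ℝ :=
  if k = j then
    4 * |lam j| * (Real.sqrt |lam j| - Real.sqrt |lam (j - 1)|) /
      (Real.sqrt |lam j| + Real.sqrt |lam (j - 1)|)
  else if k = j + 1 then
    (Real.sqrt |lam (j + 1)| + Real.sqrt |lam j|) /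
      (4 * |lam j| * (Real.sqrt |lam (j + 1)| - Real.sqrt |lam j|))
  else
    ((Real.sqrt |lam j| - Real.sqrt |lam (k - 1)|) * (Real.sqrt |lam j| + Real.sqrt |lam k|)) /
      ((Real.sqrt |lam j| - Real.sqrt |lam k|) * (Real.sqrt |lam j| + Real.sqrt |lam (k - 1)|))

/-- `T̃_{k,j} = (√|λ_j| + √|λ_k|)² / |λ_j - λ_k|`. -/
noncomputable def Ttilde (lam : ℕ → ℝ) (k j : ℕ) : ℝ :=
  (Real.sqrt |lam j| + Real.sqrt |lam k|) ^ 2 / |lam j - lam k|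

/-- Telescoping sum over `Icc 2 m`. -/
lemma telescope_Icc (F : ℕ → ℂ) (m : ℕ) (hm : 1 ≤ m) :
    ∑ k ∈ Finset.Icc 2 m, (F k - F (k - 1)) = F m - F 1 := by
  induction m, hm using Nat.le_induction with
  | base => simp
  | succ n hn ih =>
    rw [Finset.sum_Icc_succ_top (by omega), ih]
    simp only [Nat.add_sub_cancel]
    ring

/-- For `0 ≥ λ₁ > λ₂ > ⋯ > λ_m`, parameters `s₂,…,s_m ∈ (0,1]` (with `s_{m+1} = 1`) and
`β_j` defined by `e^{-2πiβ_j} = s_j/s_{j+1}`, i.e. `β_j = (log s_{j+1} - log s_j)/(2πi)`,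
the identity `∏_{k=2}^m T_{k,j}^{(log s_k)/(2πi)} = (4|λ_j|)^{-β_j} ∏_{k≠j} T̃_{k,j}^{-β_k}`
holds for every `j ∈ {2,…,m}`. -/
theorem prod_Tconst_cpow_eq (m : ℕ) (hm : 2 ≤ m) (lam : ℕ → ℝ) (s : ℕ → ℝ) (β : ℕ → ℂ)
    (hlam1 : lam 1 = 0)
    (hlamneg : ∀ j, 2 ≤ j → j ≤ m → lam j < 0)
    (hord : ∀ j, 2 ≤ j → j ≤ m → lam j < lam (j - 1))
    (hspos : ∀ j, 2 ≤ j → j ≤ m → 0 < s j)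
    (hsle : ∀ j, 2 ≤ j → j ≤ m → s j ≤ 1)
    (hslast : s (m + 1) = 1)
    (hβ : ∀ j, 2 ≤ j → j ≤ m →
      β j = ((Real.log (s (j + 1)) : ℂ) - (Real.log (s j) : ℂ)) / (2 * Real.pi * Complex.I))
    (j : ℕ) (hj2 : 2 ≤ j) (hjm : j ≤ m) :
    ∏ k ∈ Finset.Icc 2 m,
        ((Tconst lam k j : ℂ) ^ (((Real.log (s k) : ℂ)) / (2 * Real.pi * Complex.I))) =
      ((4 * |lam j| : ℝ) : ℂ) ^ (-β j) *
        ∏ k ∈ (Finset.Icc 2 m).erase j, ((Ttilde lam k j : ℂ) ^ (-β k)) := by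
  classical
  set a : ℕ → ℝ := fun k => Real.sqrt |lam k| with ha
  have ha' : ∀ k, Real.sqrt |lam k| = a k := fun _ => rfl
  have hanneg : ∀ k, 0 ≤ a k := fun k => Real.sqrt_nonneg _
  have hlamle : ∀ k, 1 ≤ k → k ≤ m → lam k ≤ 0 := by
    intro k h1 h2
    rcases eq_or_lt_of_le h1 with h | h
    · rw [← h, hlam1]
    · exact (hlamneg k h h2).le
  have hasq : ∀ k, 1 ≤ k → k ≤ m → lam k = -(a k) ^ 2 := by
    intro k h1 h2
    have h0 := hlamle k h1 h2
    have : (a k) ^ 2 = |lam k| := Real.sq_sqrt (abs_nonneg _)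
    rw [this, abs_of_nonpos h0]; ring
  have hapos : ∀ k, 2 ≤ k → k ≤ m → 0 < a k := by
    intro k h1 h2
    exact Real.sqrt_pos.mpr (abs_pos.mpr (hlamneg k h1 h2).ne)
  have ha1 : a 1 = 0 := by simp [ha, hlam1]
  have hadj : ∀ k, 2 ≤ k → k ≤ m → a (k - 1) < a k := by
    intro k h1 h2
    apply Real.sqrt_lt_sqrt (abs_nonneg _)
    have h3 := hord k h1 h2
    have h4 : lam (k - 1) ≤ 0 := hlamle (k - 1) (by omega) (by omega)
    rw [abs_of_nonpos h4, abs_of_nonpos (hlamle k (by omega) h2)]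
    linarith
  have hmono : ∀ l k, 1 ≤ k → k < l → l ≤ m → a k < a l := by
    intro l
    induction l with
    | zero => omega
    | succ n ih =>
      intro k h1 h2 h3
      have hstep : a n < a (n + 1) := by
        have := hadj (n + 1) (by omega) h3
        simpa using this
      rcases eq_or_lt_of_le (Nat.lt_succ_iff.mp h2) with h | h
      · rw [h]; exact hstep
      · exact (ih k h1 h (by omega)).trans hstep
  have hajpos : 0 < a j := hapos j hj2 hjm
  have hane : ∀ k, 1 ≤ k → k ≤ m → k ≠ j → a k ≠ a j := by
    intro k h1 h2 h3
    rcases lt_or_gt_of_ne h3 with h | h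
    · exact (hmono j k h1 h hjm).ne
    · exact (hmono k j (by omega) h h2).ne'
  have hTt : ∀ k, 1 ≤ k → k ≤ m → k ≠ j → Ttilde lam k j = (a j + a k) / |a j - a k| := by
    intro k h1 h2 h3
    have hne : a j - a k ≠ 0 := sub_ne_zero.mpr (hane k h1 h2 h3).symm
    have habs : |lam j - lam k| = |a j - a k| * (a j + a k) := by
      rw [hasq j (by omega) hjm, hasq k h1 h2]
      have h5 : -(a j) ^ 2 - -(a k) ^ 2 = -((a j - a k) * (a j + a k)) := by ring
      rw [h5, abs_neg, abs_mul,
        abs_of_pos (show (0:ℝ) < a j + a k by have := hanneg k; linarith)]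
    rw [Ttilde, ha', ha', habs]
    have hx : a j + a k ≠ 0 := by have := hanneg k; positivity
    rw [sq, mul_comm (|a j - a k|) (a j + a k), ← div_div, mul_div_assoc,
      div_self hx, mul_one]
  set E : ℕ → ℝ := fun k => if k = j then 4 * |lam j| else Ttilde lam k j with hE
  have hEj : E j = 4 * |lam j| := by rw [hE]; simp
  have hEk : ∀ k, k ≠ j → E k = Ttilde lam k j := by intro k hk; rw [hE]; simp [hk]
  have h4pos : (0:ℝ) < 4 * |lam j| := by
    have := abs_pos.mpr (hlamneg j hj2 hjm).ne; linarith
  have hEpos : ∀ k, 1 ≤ k → k ≤ m → 0 < E k := by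
    intro k h1 h2
    by_cases hk : k = j
    · rw [hk, hEj]; exact h4pos
    · rw [hEk k hk, hTt k h1 h2 hk]
      have hne : a j - a k ≠ 0 := sub_ne_zero.mpr (hane k h1 h2 hk).symm
      apply div_pos (by have := hanneg k; linarith) (abs_pos.mpr hne)
  have hE1 : E 1 = 1 := by
    rw [hEk 1 (by omega), hTt 1 (by omega) (by omega) (by omega), ha1]
    rw [add_zero, sub_zero, abs_of_pos hajpos, div_self hajpos.ne']
  have hT : ∀ k, 2 ≤ k → k ≤ m → Tconst lam k j = E k / E (k - 1) := by
    intro k h1 h2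
    by_cases hkj : k = j
    · subst hkj
      have hlt : a (k - 1) < a k := hadj k h1 h2
      have hE' : E (k - 1) = (a k + a (k - 1)) / (a k - a (k - 1)) := by
        rw [hEk (k - 1) (by omega), hTt (k - 1) (by omega) (by omega) (by omega),
          abs_of_pos (by linarith)]
      rw [Tconst, if_pos rfl, ha', ha', hEj, hE']
      have h5 : a k + a (k - 1) ≠ 0 := by have := hanneg (k - 1); positivity
      have h6 : a k - a (k - 1) ≠ 0 := by linarith
      field_simp
    · by_cases hkj1 : k = j + 1
      · subst hkj1
        have hlt : a j < a (j + 1) := hmono (j + 1) j (by omega) (by omega) h2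
        have hE' : E (j + 1) = (a j + a (j + 1)) / (a (j + 1) - a j) := by
          rw [hEk (j + 1) (by omega), hTt (j + 1) (by omega) h2 (by omega)]
          rw [abs_of_neg (by linarith), neg_sub]
        rw [Tconst, if_neg (by omega), if_pos rfl, ha', ha']
        have h7 : j + 1 - 1 = j := by omega
        rw [h7, hE', hEj]
        have h5 : a j + a (j + 1) ≠ 0 := by positivity
        have h6 : a (j + 1) - a j ≠ 0 := by linarith
        field_simp
        ring
      · have hk1j : k - 1 ≠ j := by omega
        have hEk' : E k = (a j + a k) / |a j - a k| :=
          (hEk k hkj).trans (hTt k (by omega) h2 hkj)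
        have hEk1' : E (k - 1) = (a j + a (k - 1)) / |a j - a (k - 1)| :=
          (hEk (k - 1) hk1j).trans (hTt (k - 1) (by omega) (by omega) hk1j)
        rw [Tconst, if_neg hkj, if_neg hkj1, ha', ha', ha', hEk', hEk1']
        rcases lt_or_gt_of_ne (fun h : k = j => hkj h) with hlt | hgt
        · -- k < j, so k - 1 < j as well
          have h5 : a k < a j := hmono j k (by omega) hlt hjm
          have h6 : a (k - 1) < a j := by
            rcases eq_or_lt_of_le (by omega : 1 ≤ k - 1) with h | h
            · rw [← h, ha1]; exact hajpos
            · exact hmono j (k - 1) (by omega) (by omega) hjm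
          rw [abs_of_pos (by linarith), abs_of_pos (by linarith)]
          have h7 : a j + a k ≠ 0 := by positivity
          have h8 : a j + a (k - 1) ≠ 0 := by have := hanneg (k - 1); positivity
          have h9 : a j - a k ≠ 0 := by linarith
          have h10 : a j - a (k - 1) ≠ 0 := by linarith
          field_simp
        · -- k > j, and since k ≠ j+1, k - 1 > j
          have h5 : a j < a k := hmono k j (by omega) hgt h2
          have h6 : a j < a (k - 1) := hmono (k - 1) j (by omega) (by omega) (by omega)
          rw [abs_of_neg (by linarith), abs_of_neg (by linarith)]
          have h7 : a j + a k ≠ 0 := by positivity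
          have h8 : a j + a (k - 1) ≠ 0 := by positivity
          have h9 : a j - a k ≠ 0 := by linarith
          have h10 : a j - a (k - 1) ≠ 0 := by linarith
          have h11 : (a j - a k) * (a j + a (k - 1)) ≠ 0 := mul_ne_zero h9 h8
          have h12 : a k - a j ≠ 0 := by linarith
          have h13 : a (k - 1) - a j ≠ 0 := by linarith
          rw [div_div_eq_mul_div, div_mul_eq_mul_div, div_div,
            div_eq_div_iff h11 (mul_ne_zero (neg_ne_zero.mpr h9) h8)]
          ring
  set u : ℕ → ℝ := fun k => Real.log (E k) with hu
  set c : ℕ → ℂ := fun k => (Real.log (s k) : ℂ) / (2 * Real.pi * Complex.I) with hc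
  have hcm1 : c (m + 1) = 0 := by rw [hc]; simp [hslast]
  have hu1 : u 1 = 0 := by rw [hu]; simp [hE1]
  have hcpow : ∀ (x : ℝ), 0 < x → ∀ y : ℂ, (x : ℂ) ^ y = Complex.exp (↑(Real.log x) * y) := by
    intro x hx y
    rw [Complex.cpow_def_of_ne_zero (by exact_mod_cast hx.ne'), Complex.ofReal_log hx.le]
  have hjmem : j ∈ Finset.Icc 2 m := Finset.mem_Icc.mpr ⟨hj2, hjm⟩
  have hLHS : ∏ k ∈ Finset.Icc 2 m,
      ((Tconst lam k j : ℂ) ^ (((Real.log (s k) : ℂ)) / (2 * Real.pi * Complex.I))) =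
      Complex.exp (∑ k ∈ Finset.Icc 2 m, (↑(u k - u (k - 1)) : ℂ) * c k) := by
    rw [Complex.exp_sum]
    apply Finset.prod_congr rfl
    intro k hk
    obtain ⟨hk2, hkm⟩ := Finset.mem_Icc.mp hk
    have hp1 := hEpos k (by omega) hkm
    have hp2 := hEpos (k - 1) (by omega) (by omega)
    have hTpos : 0 < Tconst lam k j := by
      rw [hT k hk2 hkm]; exact div_pos hp1 hp2
    rw [hcpow _ hTpos, hT k hk2 hkm, Real.log_div hp1.ne' hp2.ne']
  have hRHS : ((4 * |lam j| : ℝ) : ℂ) ^ (-β j) *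
      ∏ k ∈ (Finset.Icc 2 m).erase j, ((Ttilde lam k j : ℂ) ^ (-β k)) =
      Complex.exp (∑ k ∈ Finset.Icc 2 m, (↑(u k) : ℂ) * (-β k)) := by
    rw [Complex.exp_sum,
      ← Finset.mul_prod_erase _ (fun k => Complex.exp ((↑(u k) : ℂ) * (-β k))) hjmem]
    congr 1
    · have huj : u j = Real.log (4 * |lam j|) := by simp only [hu]; rw [hEj]
      rw [huj, hcpow _ h4pos]
    · apply Finset.prod_congr rfl
      intro k hk
      obtain ⟨hkj, hkmem⟩ := Finset.mem_erase.mp hk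
      obtain ⟨hk2, hkm⟩ := Finset.mem_Icc.mp hkmem
      have hp : 0 < Ttilde lam k j := by
        have := hEpos k (by omega) hkm
        rwa [hEk k hkj] at this
      have huk : u k = Real.log (Ttilde lam k j) := by simp only [hu]; rw [hEk k hkj]
      rw [huk, hcpow _ hp]
  rw [hLHS, hRHS]
  congr 1
  have hβ' : ∀ k, 2 ≤ k → k ≤ m → -β k = c k - c (k + 1) := by
    intro k h1 h2
    rw [hβ k h1 h2]
    simp only [hc]
    ring
  have key : ∀ k ∈ Finset.Icc 2 m, (↑(u k - u (k - 1)) : ℂ) * c k =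
      (↑(u k) : ℂ) * (-β k) + (((↑(u k) : ℂ) * c (k + 1)) - ((↑(u (k - 1)) : ℂ) * c (k - 1 + 1))) := by
    intro k hk
    obtain ⟨hk2, hkm⟩ := Finset.mem_Icc.mp hk
    rw [hβ' k hk2 hkm]
    have h7 : k - 1 + 1 = k := by omega
    rw [h7]
    push_cast
    ring
  rw [Finset.sum_congr rfl key, Finset.sum_add_distrib,
    telescope_Icc (fun k => (↑(u k) : ℂ) * c (k + 1)) m (by omega)]
  simp [hcm1, hu1]
end

section
/- Let 0 > λ_m < λ_{m-1} < ... < λ₁ ≤ 0 and s_1,...,s_m > 0, and define D(λ) = exp( (λ^{1/2}/(2π)) Σ_{j=1}^m log s_j ∫_{λ_j}^{λ_{j-1}} (-u)^{-1/2} du/(λ - u) ) for λ ∈ ℂ∖(-∞,0], where λ₀ = 0 (or +∞ as appropriate) and principal branches are taken. Then D admits an alternative product representation D(λ) = ∏_{j=1}^m ( (√λ - i√|λ_{j-1}|)(√λ + i√|λ_j|) / ((√λ - i√|λ_j|)(√λ + i√|λ_{j-1}|)) )^{(log s_j)/(2πi)}. -/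
open scoped Real

namespace DprodAux

open Complex Set

lemma re_add (w : ℂ) (t : ℝ) : (w + Complex.I * t).re = w.re := by simp

lemma re_sub (w : ℂ) (t : ℝ) : (w - Complex.I * t).re = w.re := by simp

lemma ne_add {w : ℂ} (hw : 0 < w.re) (t : ℝ) : w + Complex.I * t ≠ 0 := by
  intro h
  have := re_add w t
  rw [h] at this
  simp at this
  linarith

lemma ne_sub {w : ℂ} (hw : 0 < w.re) (t : ℝ) : w - Complex.I * t ≠ 0 := by
  intro h
  have := re_sub w t
  rw [h] at this
  simp at this
  linarith

lemma C_im (w : ℂ) (t : ℝ) :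
    ((w + Complex.I * t) / (w - Complex.I * t)).im
      = 2 * t * w.re / Complex.normSq (w - Complex.I * t) := by
  rw [Complex.div_im]
  simp
  ring

lemma C_slit {w : ℂ} (hw : 0 < w.re) {t : ℝ} (ht : 0 ≤ t) :
    (w + Complex.I * t) / (w - Complex.I * t) ∈ Complex.slitPlane := by
  rcases ht.eq_or_lt with h | h
  · have hw0 : w ≠ 0 := by intro h0; rw [h0] at hw; simp at hw
    simp only [← h]
    norm_num [div_self hw0]
  · right
    rw [C_im]
    have h1 : 0 < Complex.normSq (w - Complex.I * t) :=
      Complex.normSq_pos.2 (ne_sub hw t)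
    positivity

lemma C_arg_nonneg {w : ℂ} (hw : 0 < w.re) {t : ℝ} (ht : 0 ≤ t) :
    0 ≤ ((w + Complex.I * t) / (w - Complex.I * t)).arg := by
  rw [Complex.arg_nonneg_iff, C_im]
  have h1 : 0 < Complex.normSq (w - Complex.I * t) :=
    Complex.normSq_pos.2 (ne_sub hw t)
  positivity

lemma C_arg_lt_pi {w : ℂ} (hw : 0 < w.re) {t : ℝ} (ht : 0 ≤ t) :
    ((w + Complex.I * t) / (w - Complex.I * t)).arg < Real.pi := by
  refine lt_of_le_of_ne (Complex.arg_le_pi _) ?_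
  intro h
  rw [Complex.arg_eq_pi_iff] at h
  have him := h.2
  rw [C_im] at him
  have h1 : 0 < Complex.normSq (w - Complex.I * t) :=
    Complex.normSq_pos.2 (ne_sub hw t)
  have ht0 : t = 0 := by
    have := (div_eq_zero_iff.1 him)
    rcases this with h2 | h2
    · nlinarith
    · linarith
  rw [ht0] at h
  have hw0 : w ≠ 0 := by intro h0; rw [h0] at hw; simp at hw
  norm_num [div_self hw0] at h

lemma log_div_eq {w : ℂ} (hw : 0 < w.re) {a b : ℝ} (ha : 0 ≤ a) (hb : 0 ≤ b) :
    Complex.log (((w + Complex.I * a) / (w - Complex.I * a))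
        / ((w + Complex.I * b) / (w - Complex.I * b)))
      = Complex.log ((w + Complex.I * a) / (w - Complex.I * a))
        - Complex.log ((w + Complex.I * b) / (w - Complex.I * b)) := by
  set A := (w + Complex.I * a) / (w - Complex.I * a) with hA
  set B := (w + Complex.I * b) / (w - Complex.I * b) with hB
  have hA0 : A ≠ 0 := div_ne_zero (ne_add hw a) (ne_sub hw a)
  have hB0 : B ≠ 0 := div_ne_zero (ne_add hw b) (ne_sub hw b)
  have hexp : Complex.exp (Complex.log A - Complex.log B) = A / B := by
    rw [Complex.exp_sub, Complex.exp_log hA0, Complex.exp_log hB0]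
  have him : (Complex.log A - Complex.log B).im = A.arg - B.arg := by
    simp [Complex.log_im]
  rw [← hexp, Complex.log_exp]
  · rw [him]
    have := C_arg_nonneg hw ha
    have := C_arg_lt_pi hw hb
    rw [← hA, ← hB] at *
    linarith
  · rw [him]
    have := C_arg_lt_pi hw ha
    have := C_arg_nonneg hw hb
    rw [← hA, ← hB] at *
    linarith

lemma rpow_half_eq (y : ℝ) : y ^ (-(1/2) : ℝ) = (Real.sqrt y)⁻¹ := by
  rcases le_or_gt 0 y with h | h
  · rw [Real.rpow_neg h, Real.sqrt_eq_rpow]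
  · rw [Real.rpow_def_of_neg h, Real.sqrt_eq_zero_of_nonpos h.le]
    rw [show (-(1/2) : ℝ) * Real.pi = -(Real.pi/2) by ring]
    rw [Real.cos_neg, Real.cos_pi_div_two]
    simp

lemma integral_eval (z w : ℂ) (hz : z.im ≠ 0 ∨ 0 < z.re) (hw : 0 < w.re) (hw2 : w ^ 2 = z)
    (l1 l0 : ℝ) (h10 : l1 ≤ l0) (h0 : l0 ≤ 0) :
    (∫ u in l1..l0, ((Real.sqrt (-u))⁻¹ : ℂ) / (z - u))
      = (1 / (Complex.I * w)) *
        (Complex.log ((w + Complex.I * Real.sqrt (-l1)) / (w - Complex.I * Real.sqrt (-l1)))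
         - Complex.log ((w + Complex.I * Real.sqrt (-l0)) / (w - Complex.I * Real.sqrt (-l0)))) := by
  have hw0 : w ≠ 0 := by intro h0'; rw [h0'] at hw; simp at hw
  have hznn : ∀ u : ℝ, u ≤ 0 → z - u ≠ 0 := by
    intro u hu h
    rcases hz with h' | h'
    · apply h'
      have := congrArg Complex.im h
      simpa using this
    · have := congrArg Complex.re h
      simp at this
      linarith
  set F : ℝ → ℂ := fun u => -(1 / (Complex.I * w)) *
    Complex.log ((w + Complex.I * Real.sqrt (-u)) / (w - Complex.I * Real.sqrt (-u))) with hFdef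
  have hsqC : Continuous fun u : ℝ => ((Real.sqrt (-u) : ℝ) : ℂ) := by
    exact Complex.continuous_ofReal.comp (Real.continuous_sqrt.comp continuous_neg)
  have key : (∫ u in l1..l0, ((Real.sqrt (-u))⁻¹ : ℂ) / (z - u)) = F l0 - F l1 := by
    apply intervalIntegral.integral_eq_sub_of_hasDeriv_right_of_le h10
    · -- continuity of F
      apply ContinuousOn.mul continuousOn_const
      apply ContinuousOn.clog
      · apply Continuous.continuousOn
        exact (continuous_const.add (continuous_const.mul hsqC)).div
          (continuous_const.sub (continuous_const.mul hsqC)) (fun u => ne_sub hw _)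
      · intro x _
        exact C_slit hw (Real.sqrt_nonneg _)
    · -- derivative
      intro u hu
      have hu0 : u < 0 := lt_of_lt_of_le hu.2 h0
      have htpos : 0 < Real.sqrt (-u) := Real.sqrt_pos.2 (by linarith)
      set t := Real.sqrt (-u) with htdef
      have ht2 : t ^ 2 = -u := Real.sq_sqrt (by linarith)
      have hs : HasDerivAt (fun u : ℝ => Real.sqrt (-u)) (-(1 / (2 * t))) u := by
        have h1 : HasDerivAt (fun u : ℝ => -u) (-1) u := (hasDerivAt_neg u)
        have h2 := (Real.hasDerivAt_sqrt (show -u ≠ 0 by linarith)).comp u h1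
        simpa [htdef, Function.comp_def] using h2
      have hsC : HasDerivAt (fun u : ℝ => ((Real.sqrt (-u) : ℝ) : ℂ)) ((-(1 / (2 * t)) : ℝ) : ℂ) u :=
        hs.ofReal_comp
      have hN : HasDerivAt (fun u : ℝ => w + Complex.I * ((Real.sqrt (-u) : ℝ) : ℂ))
          (Complex.I * ((-(1 / (2 * t)) : ℝ) : ℂ)) u := (hsC.const_mul Complex.I).const_add w
      have hD : HasDerivAt (fun u : ℝ => w - Complex.I * ((Real.sqrt (-u) : ℝ) : ℂ))
          (-(Complex.I * ((-(1 / (2 * t)) : ℝ) : ℂ))) u := (hsC.const_mul Complex.I).const_sub w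
      have hQ := hN.div hD (ne_sub hw t)
      have hL := hQ.clog_real (C_slit hw htpos.le)
      have hfinal := hL.const_mul (-(1 / (Complex.I * w)))
      have heq : (((Real.sqrt (-u))⁻¹ : ℂ) / (z - u)) =
          -(1 / (Complex.I * w)) *
            ((Complex.I * ((-(1 / (2 * t)) : ℝ) : ℂ) * (w - Complex.I * t) -
              (w + Complex.I * t) * -(Complex.I * ((-(1 / (2 * t)) : ℝ) : ℂ))) /
              (w - Complex.I * t) ^ 2 /
              ((w + Complex.I * t) / (w - Complex.I * t))) := by
        have htC : ((t : ℂ)) ^ 2 = -(u : ℂ) := by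
          exact_mod_cast ht2
        have hND : (w + Complex.I * t) * (w - Complex.I * t) = z - u := by
          have h' : (w + Complex.I * t) * (w - Complex.I * t) = w ^ 2 - Complex.I ^ 2 * (t:ℂ) ^ 2 := by
            ring
          rw [h', Complex.I_sq, hw2, htC]
          ring
        have ht0 : (t : ℂ) ≠ 0 := by
          exact_mod_cast htpos.ne'
        have hzu : z - (u : ℂ) ≠ 0 := hznn u hu0.le
        have hNne : w + Complex.I * t ≠ 0 := ne_add hw t
        have hDne : w - Complex.I * t ≠ 0 := ne_sub hw t
        have hc : ((-(1 / (2 * t)) : ℝ) : ℂ) = -(1 / (2 * (t : ℂ))) := by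
          push_cast
          ring
        rw [hc]
        have hX : Complex.I * -(1 / (2 * (t : ℂ))) * (w - Complex.I * t) -
            (w + Complex.I * t) * -(Complex.I * -(1 / (2 * (t : ℂ))))
            = -(Complex.I * w / (t : ℂ)) := by
          field_simp
          ring
        have hDD : ((w - Complex.I * t) ^ 2 : ℂ) * ((w + Complex.I * t) / (w - Complex.I * t))
            = (w + Complex.I * t) * (w - Complex.I * t) := by
          field_simp
        rw [div_div, hX, hDD, hND]
        have hst : ((Real.sqrt (-u) : ℝ) : ℂ) ≠ 0 := ht0
        field_simp
        rw [htdef]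
      rw [heq] at *
      exact hfinal.hasDerivWithinAt
    · -- integrability
      have h1 : IntervalIntegrable (fun x : ℝ => x ^ (-(1/2) : ℝ)) MeasureTheory.volume (-l1) (-l0) :=
        intervalIntegral.intervalIntegrable_rpow' (by norm_num)
      have h2 := h1.comp_sub_left 0
      have h3 : IntervalIntegrable (fun u : ℝ => (Real.sqrt (-u))⁻¹) MeasureTheory.volume l1 l0 := by
        have : (fun x : ℝ => (0 - x) ^ (-(1/2) : ℝ)) = fun u : ℝ => (Real.sqrt (-u))⁻¹ := by
          funext x
          rw [zero_sub, rpow_half_eq]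
        rw [this] at h2
        simpa using h2
      have h4 : IntervalIntegrable (fun u : ℝ => ((Real.sqrt (-u))⁻¹ : ℂ)) MeasureTheory.volume l1 l0 := by
        rw [intervalIntegrable_iff] at h3 ⊢
        have := h3.ofReal (𝕜 := ℂ)
        simpa [Complex.ofReal_inv, MeasureTheory.IntegrableOn] using this
      have hcont : ContinuousOn (fun u : ℝ => ((z : ℂ) - u)⁻¹) (Set.uIcc l1 l0) := by
        apply ContinuousOn.inv₀
        · exact (Continuous.continuousOn (by continuity))
        · intro x hx
          rw [Set.uIcc_of_le h10] at hx
          exact hznn x (le_trans hx.2 h0)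
      have := h4.mul_continuousOn hcont
      simpa [div_eq_mul_inv] using this
  rw [key, hFdef]
  ring
end DprodAux

/-- For `0 = λ₀ ≥ λ₁ > ⋯ > λ_m` and `s_j > 0`, the Szegő-type function
`D(λ) = exp((λ^{1/2}/(2π)) Σ_j log s_j ∫_{λ_j}^{λ_{j-1}} (-u)^{-1/2} du/(λ-u))`
admits, on `ℂ ∖ (-∞,0]`, the product representation
`D(λ) = ∏_j ((√λ - i√|λ_{j-1}|)(√λ + i√|λ_j|)/((√λ - i√|λ_j|)(√λ + i√|λ_{j-1}|)))^{log s_j/(2πi)}`. -/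
theorem Dfunction_product_representation (m : ℕ) (hm : 1 ≤ m) (lam : ℕ → ℝ) (s : ℕ → ℝ)
    (hlam0 : lam 0 = 0) (hlam1 : lam 1 ≤ 0)
    (hord : ∀ j, 2 ≤ j → j ≤ m → lam j < lam (j - 1))
    (hlamm : lam m < 0)
    (hspos : ∀ j, 1 ≤ j → j ≤ m → 0 < s j)
    (z : ℂ) (hz : z.im ≠ 0 ∨ 0 < z.re) :
    Complex.exp ((z ^ ((1 : ℂ) / 2) / (2 * Real.pi)) *
        ∑ j ∈ Finset.Icc 1 m, (Real.log (s j) : ℂ) *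
          ∫ u in (lam j)..(lam (j - 1)), ((Real.sqrt (-u))⁻¹ : ℂ) / (z - u)) =
      ∏ j ∈ Finset.Icc 1 m,
        (((z ^ ((1 : ℂ) / 2) - Complex.I * Real.sqrt |lam (j - 1)|) *
            (z ^ ((1 : ℂ) / 2) + Complex.I * Real.sqrt |lam j|)) /
          ((z ^ ((1 : ℂ) / 2) - Complex.I * Real.sqrt |lam j|) *
            (z ^ ((1 : ℂ) / 2) + Complex.I * Real.sqrt |lam (j - 1)|))) ^
          ((Real.log (s j) : ℂ) / (2 * Real.pi * Complex.I)) := by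
  have hz0 : z ≠ 0 := by
    rintro rfl
    rcases hz with h | h <;> simp at h
  set w := z ^ ((1 : ℂ) / 2) with hwdef
  have hw2 : w ^ 2 = z := by
    have h12 : ((1 : ℂ) / 2) = ((2 : ℕ) : ℂ)⁻¹ := by norm_num
    rw [hwdef, h12]
    exact Complex.cpow_nat_inv_pow z two_ne_zero
  have hargz : z.arg < Real.pi := by
    refine lt_of_le_of_ne (Complex.arg_le_pi z) ?_
    intro h
    rw [Complex.arg_eq_pi_iff] at h
    rcases hz with h' | h'
    · exact h' h.2
    · linarith [h.1]
  have hwre : 0 < w.re := by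
    rw [hwdef, Complex.cpow_def_of_ne_zero hz0, Complex.exp_re]
    apply mul_pos (Real.exp_pos _)
    apply Real.cos_pos_of_mem_Ioo
    have him : (Complex.log z * ((1 : ℂ) / 2)).im = z.arg / 2 := by
      simp [Complex.mul_im, Complex.log_im]
      ring
    rw [him]
    constructor
    · have := Complex.neg_pi_lt_arg z
      linarith
    · linarith
  have hneg : ∀ j, j ≤ m → lam j ≤ 0 := by
    intro j hj
    induction j with
    | zero => rw [hlam0]
    | succ n ih =>
      rcases Nat.lt_or_ge n 1 with h | h
      · interval_cases n
        exact hlam1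
      · have h1 := hord (n + 1) (by omega) hj
        have h2 : lam n ≤ 0 := ih (by omega)
        simp only [Nat.add_sub_cancel] at h1
        linarith
  rw [Finset.mul_sum, Complex.exp_sum]
  apply Finset.prod_congr rfl
  intro j hj
  rw [Finset.mem_Icc] at hj
  have hj1 : lam j ≤ lam (j - 1) := by
    rcases Nat.lt_or_ge j 2 with h | h
    · have hj1' : j = 1 := by omega
      rw [hj1']
      simp [hlam0, hlam1]
    · exact (hord j h hj.2).le
  have hj0 : lam (j - 1) ≤ 0 := hneg (j - 1) (by omega)
  have hjj : lam j ≤ 0 := le_trans hj1 hj0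
  rw [DprodAux.integral_eval z w hz hwre hw2 _ _ hj1 hj0]
  have habs1 : |lam j| = -(lam j) := abs_of_nonpos hjj
  have habs0 : |lam (j - 1)| = -(lam (j - 1)) := abs_of_nonpos hj0
  rw [habs1, habs0]
  set a := Real.sqrt (-(lam j)) with hadef
  set b := Real.sqrt (-(lam (j - 1))) with hbdef
  have hNa : w + Complex.I * a ≠ 0 := DprodAux.ne_add hwre a
  have hDa : w - Complex.I * a ≠ 0 := DprodAux.ne_sub hwre a
  have hNb : w + Complex.I * b ≠ 0 := DprodAux.ne_add hwre b
  have hDb : w - Complex.I * b ≠ 0 := DprodAux.ne_sub hwre b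
  have hbase : ((w - Complex.I * b) * (w + Complex.I * a)) /
      ((w - Complex.I * a) * (w + Complex.I * b))
      = ((w + Complex.I * a) / (w - Complex.I * a)) /
        ((w + Complex.I * b) / (w - Complex.I * b)) := by
    field_simp
  rw [hbase]
  have hAB0 : ((w + Complex.I * a) / (w - Complex.I * a)) /
      ((w + Complex.I * b) / (w - Complex.I * b)) ≠ 0 :=
    div_ne_zero (div_ne_zero hNa hDa) (div_ne_zero hNb hDb)
  rw [Complex.cpow_def_of_ne_zero hAB0]
  rw [DprodAux.log_div_eq hwre (Real.sqrt_nonneg _) (Real.sqrt_nonneg _)]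
  congr 1
  have hw0 : w ≠ 0 := by intro h0; rw [h0] at hwre; simp at hwre
  have hpi : (Real.pi : ℂ) ≠ 0 := by
    exact_mod_cast Real.pi_ne_zero
  field_simp
  ring
end
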